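/- Let n be odd and let f₁, …, f_n be continuous 2π-periodic functions forming a Chebyshev system of order n on the circle. Let ρ : ℝ → ℝ be continuous, 2π-periodic with ρ ≥ 0, and let f : ℝ → ℝ be continuous and 2π-periodic with f·ρ not identically zero. If ∫_0^{2π} f(x)·f_j(x)·ρ(x) dx = 0 for every j = 1, …, n, then f changes sign at least n+1 times per period. -/

import Mathlib

/-!
Since `n` is odd, `n + 1` points of `[0, 2π)` along which `f` alternates in sign automatically
have end points of opposite sign; so if the conclusion fails, `f` has at most `n - 1` sign
changes along `[0, 2π)`. A nonzero combination `P = ∑ cⱼ fⱼ` can be made to change sign exactly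
there: take the determinant of the collocation matrix at `x` and `n - 1` nodes placed at the sign
changes of `f` and, for the spare ones, beyond the points under consideration. Then `f P ρ ≥ 0`,
while its integral vanishes by orthogonality, so `f P ρ ≡ 0`; this is impossible because `P` has
finitely many zeros and `f ρ` is nonzero on an interval. The spare nodes can only be placed
relative to a finite set of test points, so the coefficient vector is first found for each finite
set and then, by compactness of the unit sphere, for the whole period.
-/

open Set Finset Function

def IsSignAlternating (f : ℝ → ℝ) {k : ℕ} (t : Fin (k + 1) → ℝ) : Prop :=
  ∀ i : Fin k, t i.castSucc < t i.succ ∧ f (t i.castSucc) * f (t i.succ) < 0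

namespace IsSignAlternating

variable {f : ℝ → ℝ} {k : ℕ} {t : Fin (k + 1) → ℝ}

theorem strictMono (h : IsSignAlternating f t) : StrictMono t :=
  Fin.strictMono_iff_lt_succ.mpr fun i => (h i).1

theorem neg_one_pow_mul_pos (h : IsSignAlternating f t) (h0 : f (t 0) ≠ 0) (i : Fin (k + 1)) :
    0 < (-1) ^ (i : ℕ) * (f (t 0) * f (t i)) := by
  induction i using Fin.induction with
  | zero => simpa using mul_self_pos.mpr h0
  | succ i ih =>
    have hi := (h i).2
    rw [Fin.val_castSucc] at ih
    rw [Fin.val_succ, pow_succ]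
    nlinarith [mul_pos ih (neg_pos.mpr hi), sq_nonneg (f (t i.castSucc))]

theorem mul_neg_of_odd (h : IsSignAlternating f t) (hk : Odd k) :
    f (t (Fin.last k)) * f (t 0) < 0 := by
  obtain ⟨j, rfl⟩ := hk
  have h0 : f (t 0) ≠ 0 := fun h0 => by simpa [h0] using (h 0).2
  have := h.neg_one_pow_mul_pos h0 (Fin.last _)
  rw [Fin.val_last, Odd.neg_one_pow ⟨j, rfl⟩] at this
  linarith

theorem castLE (h : IsSignAlternating f t) {m : ℕ} (hm : m ≤ k) :
    IsSignAlternating f (t ∘ Fin.castLE (Nat.succ_le_succ hm)) := fun i => by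
  simpa [Fin.castLE_succ, Fin.castLE_castSucc] using h (Fin.castLE hm i)

theorem snoc (h : IsSignAlternating f t) {a : ℝ} (hlt : t (Fin.last k) < a)
    (hneg : f (t (Fin.last k)) * f a < 0) :
    IsSignAlternating f (Fin.snoc t a : Fin (k + 2) → ℝ) := by
  intro i
  induction i using Fin.lastCases with
  | last => simpa using ⟨hlt, hneg⟩
  | cast i => rw [Fin.succ_castSucc, Fin.snoc_castSucc, Fin.snoc_castSucc]; exact h i

end IsSignAlternating

-- `Z` consists of the points of `B` whose predecessor in `B` has the opposite sign.
theorem exists_sign_pattern_of_finset {f : ℝ → ℝ} (B : Finset ℝ) (hB : B.Nonempty)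
    (hf : ∀ x ∈ B, f x ≠ 0) :
    ∃ (k : ℕ) (Z : Finset ℝ) (t : Fin (k + 1) → ℝ), Z ⊆ B ∧ #Z = k ∧
      IsSignAlternating f t ∧ (∀ i, t i ∈ B) ∧
      ∀ x ∈ B, 0 < (-1) ^ #{z ∈ Z | z ≤ x} * (f (t 0) * f x) := by
  classical
  induction B using Finset.induction_on_max with
  | empty => exact absurd hB Finset.not_nonempty_empty
  | insert a s has ih =>
    have hfa : f a ≠ 0 := hf a (mem_insert_self a s)
    rcases s.eq_empty_or_nonempty with rfl | hs
    · refine ⟨0, ∅, fun _ => a, by simp, rfl, fun i => i.elim0, by simp, ?_⟩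
      simpa using mul_self_pos.mpr hfa
    obtain ⟨k, Z, t, hZs, rfl, ht, hts, hpat⟩ :=
      ih hs fun x hx => hf x (mem_insert_of_mem hx)
    have hZa : ∀ z ∈ Z, z < a := fun z hz => has z (hZs hz)
    set b := s.max' hs
    have hb : 0 < (-1) ^ #Z * (f (t 0) * f b) := by
      have := hpat b (s.max'_mem hs)
      rwa [filter_true_of_mem fun z hz => s.le_max' z (hZs hz)] at this
    rcases (mul_ne_zero (hf b (mem_insert_of_mem (s.max'_mem hs))) hfa).lt_or_gt with hba | hba
    · have hlast := ht.neg_one_pow_mul_pos (hf _ (mem_insert_of_mem (hts 0))) (Fin.last _)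
      rw [Fin.val_last] at hlast
      refine ⟨#Z + 1, insert a Z, Fin.snoc t a, insert_subset_insert a hZs,
        card_insert_of_notMem fun h => (hZa a h).false, ht.snoc (has _ (hts _)) ?_, ?_, ?_⟩
      · nlinarith [mul_pos hb hlast]
      · intro i
        induction i using Fin.lastCases with
        | last => simp
        | cast i => simpa using mem_insert_of_mem (hts i)
      · intro x hx
        rw [show (Fin.snoc t a : Fin (#Z + 2) → ℝ) 0 = t 0 from Fin.snoc_castSucc (i := 0) ..]
        rcases mem_insert.mp hx with rfl | hx
        · rw [filter_true_of_mem fun z hz => ?_, card_insert_of_notMem fun h => (hZa x h).false,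
            pow_succ]
          · nlinarith [mul_pos hb (neg_pos.mpr hba), sq_nonneg (f b)]
          · rcases mem_insert.mp hz with rfl | hz
            exacts [le_rfl, (hZa z hz).le]
        · rw [filter_insert, if_neg (has x hx).not_ge]
          exact hpat x hx
    · refine ⟨#Z, Z, t, hZs.trans (subset_insert a s), rfl, ht,
        fun i => mem_insert_of_mem (hts i), fun x hx => ?_⟩
      rcases mem_insert.mp hx with rfl | hx
      · rw [filter_true_of_mem fun z hz => (hZa z hz).le]
        nlinarith [mul_pos hb hba, sq_nonneg (f b)]
      · exact hpat x hx

theorem IsPreconnected.mul_pos_of_forall_ne_zero {X : Type*} [TopologicalSpace X] {s : Set X}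
    (hs : IsPreconnected s) {g : X → ℝ} (hg : ContinuousOn g s) (h0 : ∀ x ∈ s, g x ≠ 0)
    {a b : X} (ha : a ∈ s) (hb : b ∈ s) : 0 < g a * g b := by
  wlog hab : g a ≤ g b generalizing a b
  · simpa [mul_comm] using this hb ha (le_of_not_ge hab)
  by_contra! hneg
  obtain ⟨c, hc, hc0⟩ := hs.intermediate_value ha hb hg
    (show (0 : ℝ) ∈ Icc (g a) (g b) by constructor <;> nlinarith)
  exact h0 c hc hc0

theorem convex_setOf_strictMono {ι : Type*} [Preorder ι] {S : Set ℝ} (hS : Convex ℝ S) :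
    Convex ℝ {v : ι → ℝ | StrictMono v ∧ ∀ i, v i ∈ S} := by
  intro v hv w hw α β hα hβ hαβ
  refine ⟨fun i j hij => ?_, fun i => hS (hv.2 i) (hw.2 i) hα hβ hαβ⟩
  have hvij := hv.1 hij
  have hwij := hw.1 hij
  simp only [Pi.add_apply, Pi.smul_apply, smul_eq_mul]
  rcases hα.eq_or_lt with rfl | hα <;> nlinarith

def IsChebyshevSystemOn {n : ℕ} (F : Fin n → ℝ → ℝ) (S : Set ℝ) : Prop :=
  ∀ c : Fin n → ℝ, c ≠ 0 → {x ∈ S | ∑ j, c j * F j x = 0}.encard ≤ (n - 1 : ℕ)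

def collocationMatrix {n : ℕ} (F : Fin n → ℝ → ℝ) (v : Fin n → ℝ) : Matrix (Fin n) (Fin n) ℝ :=
  Matrix.of fun i j => F j (v i)

namespace IsChebyshevSystemOn

variable {n : ℕ} {F : Fin n → ℝ → ℝ} {S : Set ℝ}

theorem det_collocationMatrix_ne_zero (hF : IsChebyshevSystemOn F S) {v : Fin n → ℝ}
    (hv : Injective v) (hvS : ∀ i, v i ∈ S) : (collocationMatrix F v).det ≠ 0 := by
  intro h0
  obtain ⟨c, hc0, hc⟩ := Matrix.exists_mulVec_eq_zero_iff.mpr h0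
  have hzero : range v ⊆ {x ∈ S | ∑ j, c j * F j x = 0} := by
    rintro _ ⟨i, rfl⟩
    refine ⟨hvS i, ?_⟩
    simpa [Matrix.mulVec, dotProduct, collocationMatrix, mul_comm] using congrFun hc i
  have hn : n ≠ 0 := by
    rintro rfl
    exact hc0 (Subsingleton.elim _ _)
  have := hv.encard_range.trans ((encard_le_encard hzero).trans (hF c hc0))
  simp only [ENat.card_eq_coe_fintype_card, Fintype.card_fin, Nat.cast_le] at this
  omega

theorem mul_det_collocationMatrix_pos (hF : IsChebyshevSystemOn F S) (hS : Convex ℝ S)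
    (hFc : ∀ j, Continuous (F j)) {v w : Fin n → ℝ} (hv : StrictMono v) (hvS : ∀ i, v i ∈ S)
    (hw : StrictMono w) (hwS : ∀ i, w i ∈ S) :
    0 < (collocationMatrix F v).det * (collocationMatrix F w).det := by
  have hcont : Continuous fun u => (collocationMatrix F u).det :=
    Continuous.matrix_det (continuous_matrix fun i j => (hFc j).comp (continuous_apply i))
  exact (convex_setOf_strictMono hS).isPreconnected.mul_pos_of_forall_ne_zero hcont.continuousOn
    (fun u hu => hF.det_collocationMatrix_ne_zero hu.1.injective hu.2) ⟨hv, hvS⟩ ⟨hw, hwS⟩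

end IsChebyshevSystemOn

theorem StrictMono.lt_iff_lt_card_filter {α : Type*} [LinearOrder α] {p : ℕ} {N : Fin p → α}
    (hN : StrictMono N) (x : α) (j : Fin p) :
    N j < x ↔ (j : ℕ) < #{i | N i < x} := by
  constructor
  · intro hj
    have : Finset.Iic j ⊆ ({i | N i < x} : Finset (Fin p)) := fun i hi =>
      mem_filter.mpr ⟨mem_univ i, (hN.monotone (Finset.mem_Iic.mp hi)).trans_lt hj⟩
    simpa [Fin.card_Iic] using Finset.card_le_card this
  · intro hj
    by_contra hxj
    have : ({i | N i < x} : Finset (Fin p)) ⊆ Finset.Iio j := fun i hi =>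
      Finset.mem_Iio.mpr (hN.lt_iff_lt.mp ((mem_filter.mp hi).2.trans_le (not_lt.mp hxj)))
    have := Finset.card_le_card this
    rw [Fin.card_Iio] at this
    omega

theorem StrictMono.insertNth_card_filter {α : Type*} [LinearOrder α] {p : ℕ} {N : Fin p → α}
    (hN : StrictMono N) {x : α} (hx : x ∉ range N)
    {k : Fin (p + 1)} (hk : (k : ℕ) = #{i | N i < x}) : StrictMono (k.insertNth x N) := by
  have hlt : ∀ j : Fin p, N j < x ↔ j.castSucc < k := fun j => by
    rw [hN.lt_iff_lt_card_filter, Fin.lt_def, hk, Fin.val_castSucc]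
  intro a b hab
  obtain ha | ⟨a, rfl⟩ := k.eq_self_or_eq_succAbove a <;>
    obtain hb | ⟨b, rfl⟩ := k.eq_self_or_eq_succAbove b
  · rw [ha, hb] at hab
    exact absurd hab (lt_irrefl k)
  · rw [ha, Fin.lt_succAbove_iff_le_castSucc] at hab
    rw [ha, Fin.insertNth_apply_same, Fin.insertNth_apply_succAbove]
    exact lt_of_le_of_ne (not_lt.mp fun h => ((hlt b).mp h).not_ge hab) fun h => hx ⟨b, h.symm⟩
  · rw [hb, Fin.succAbove_lt_iff_castSucc_lt] at hab
    rw [hb, Fin.insertNth_apply_same, Fin.insertNth_apply_succAbove]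
    exact (hlt a).mpr hab
  · rw [Fin.insertNth_apply_succAbove, Fin.insertNth_apply_succAbove]
    exact hN (Fin.succAbove_lt_succAbove_iff.mp hab)

-- Expanded along the row of `x`, a combination of the `F j` vanishing at the nodes `N`.
def nodalDet {p : ℕ} (F : Fin (p + 1) → ℝ → ℝ) (N : Fin p → ℝ) (x : ℝ) : ℝ :=
  (collocationMatrix F (Fin.cons x N)).det

section nodalDet

variable {p : ℕ} (F : Fin (p + 1) → ℝ → ℝ) (N : Fin p → ℝ)

theorem nodalDet_apply_node (i : Fin p) : nodalDet F N (N i) = 0 :=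
  Matrix.det_zero_of_row_eq (Fin.succ_ne_zero i).symm (by ext j; simp [collocationMatrix])

theorem exists_nodalDet_eq_sum :
    ∃ c : Fin (p + 1) → ℝ, ∀ x, nodalDet F N x = ∑ j, c j * F j x := by
  refine ⟨fun j => (-1) ^ (j : ℕ) *
    (Matrix.of fun (i : Fin p) (j' : Fin p) => F (j.succAbove j') (N i)).det, fun x => ?_⟩
  rw [nodalDet, Matrix.det_succ_row_zero]
  refine Finset.sum_congr rfl fun j _ => ?_
  simp only [collocationMatrix, Matrix.submatrix, Matrix.of_apply, Fin.cons_zero, Fin.cons_succ]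
  ring

theorem nodalDet_eq_neg_one_pow_mul (x : ℝ) (k : Fin (p + 1)) :
    nodalDet F N x = (-1) ^ (k : ℕ) * (collocationMatrix F (k.insertNth x N)).det := by
  have : collocationMatrix F (Fin.cons x N) =
      (collocationMatrix F (k.insertNth x N)).submatrix k.cycleRange.symm id := by
    ext i j
    simp [collocationMatrix]
  rw [nodalDet, this, Matrix.det_permute, Equiv.Perm.sign_symm, Fin.sign_cycleRange]
  simp

end nodalDet

theorem IsChebyshevSystemOn.nodalDet_mul_pos {p : ℕ} {F : Fin (p + 1) → ℝ → ℝ} {S : Set ℝ}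
    (hF : IsChebyshevSystemOn F S) (hS : Convex ℝ S) (hFc : ∀ j, Continuous (F j))
    {N : Fin p → ℝ} (hN : StrictMono N) (hNS : ∀ i, N i ∈ S) {x y : ℝ}
    (hx : x ∈ S) (hxN : x ∉ range N) (hy : y ∈ S) (hyN : y ∉ range N) :
    0 < (-1) ^ #{i | N i < x} * nodalDet F N x * ((-1) ^ #{i | N i < y} * nodalDet F N y) := by
  -- Sorting the rows costs the sign `(-1) ^ #{i | N i < x}`.
  have sorted : ∀ x ∈ S, x ∉ range N → ∃ v : Fin (p + 1) → ℝ, StrictMono v ∧ (∀ i, v i ∈ S) ∧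
      (-1) ^ #{i | N i < x} * nodalDet F N x = (collocationMatrix F v).det := by
    intro x hx hxN
    have hk : #{i | N i < x} < p + 1 := Nat.lt_succ_of_le (card_le_univ _ |>.trans (by simp))
    refine ⟨Fin.insertNth ⟨_, hk⟩ x N, hN.insertNth_card_filter hxN rfl, fun i => ?_, ?_⟩
    · obtain rfl | ⟨j, rfl⟩ := Fin.eq_self_or_eq_succAbove ⟨_, hk⟩ i
      · rwa [Fin.insertNth_apply_same]
      · rw [Fin.insertNth_apply_succAbove]
        exact hNS j
    · rw [nodalDet_eq_neg_one_pow_mul F N x ⟨_, hk⟩, ← mul_assoc, ← pow_add,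
        Even.neg_one_pow ⟨_, rfl⟩, one_mul]
  obtain ⟨v, hv, hvS, hxv⟩ := sorted x hx hxN
  obtain ⟨w, hw, hwS, hyw⟩ := sorted y hy hyN
  rw [hxv, hyw]
  exact hF.mul_det_collocationMatrix_pos hS hFc hv hvS hw hwS

theorem exists_strictMono_extend_above {p : ℕ} {a b M : ℝ} {Z : Finset ℝ} (hZ : ↑Z ⊆ Ico a b)
    (hZM : ∀ z ∈ Z, z ≤ M) (haM : a ≤ M) (hMb : M < b) (hp : #Z ≤ p) :
    ∃ N : Fin p → ℝ, StrictMono N ∧ (∀ i, N i ∈ Ico a b) ∧ ↑Z ⊆ range N ∧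
      (∀ i, N i ∈ Z ∨ M < N i) ∧ ∀ x ≤ M, #{i | N i < x} = #{z ∈ Z | z < x} := by
  classical
  obtain ⟨E, hE, hEcard⟩ := (Ioo_infinite hMb).exists_subset_card_eq (p - #Z)
  have hZE : Disjoint Z E := disjoint_left.mpr fun z hz hzE => (hZM z hz).not_gt (hE hzE).1
  have hcard : #(Z ∪ E) = p := by rw [card_union_of_disjoint hZE, hEcard]; omega
  set N := (Z ∪ E).orderEmbOfFin hcard
  have hNZE : ∀ i, N i ∈ Z ∨ N i ∈ E := fun i => mem_union.mp (orderEmbOfFin_mem _ hcard i)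
  refine ⟨N, N.strictMono, fun i => ?_, ?_, fun i => (hNZE i).imp_right fun h => (hE h).1,
    fun x hx => ?_⟩
  · rcases hNZE i with h | h
    exacts [hZ h, ⟨haM.trans (hE h).1.le, (hE h).2⟩]
  · rw [range_orderEmbOfFin]
    exact subset_union_left
  · rw [← card_image_of_injective _ N.injective, ← filter_image (p := (· < x)),
      image_orderEmbOfFin_univ,
      filter_union, filter_false_of_mem fun e he => not_lt.mpr (hx.trans (hE he).1.le),
      Finset.union_empty]

theorem IsChebyshevSystemOn.exists_nonneg_of_nodes {p : ℕ} {F : Fin (p + 1) → ℝ → ℝ} {a b : ℝ}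
    (hF : IsChebyshevSystemOn F (Ico a b)) (hab : a < b) (hFc : ∀ j, Continuous (F j))
    {N : Fin p → ℝ} (hN : StrictMono N) (hNS : ∀ i, N i ∈ Ico a b) {f : ℝ → ℝ} {A : Finset ℝ}
    (hA : ↑A ⊆ Ico a b) {σ : ℝ} (hσ : σ ≠ 0)
    (hpat : ∀ x ∈ A, f x ≠ 0 → x ∉ range N → 0 < (-1) ^ #{i | N i < x} * (σ * f x)) :
    ∃ c : Fin (p + 1) → ℝ, c ≠ 0 ∧ ∀ x ∈ A, 0 ≤ ∑ j, c j * (f x * F j x) := by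
  obtain ⟨x₀, hx₀, hx₀N⟩ := (Ico_infinite hab).exists_notMem_finite (finite_range N)
  obtain ⟨c, hc⟩ := exists_nodalDet_eq_sum F N
  have hsign := fun {x : ℝ} (hx : x ∈ Ico a b) (hxN : x ∉ range N) =>
    hF.nodalDet_mul_pos (convex_Ico a b) hFc hN hNS hx hxN hx₀ hx₀N
  set s := σ * ((-1) ^ #{i | N i < x₀} * nodalDet F N x₀)
  have hs : s ≠ 0 := mul_ne_zero hσ fun h => by simpa [h] using hsign hx₀ hx₀N
  refine ⟨s • c, smul_ne_zero hs fun hc0 => hs (by simp [s, hc, hc0]), fun x hx => ?_⟩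
  have hsum : ∑ j, (s • c) j * (f x * F j x) = s * (f x * nodalDet F N x) := by
    rw [hc x, Finset.mul_sum, Finset.mul_sum]
    exact Finset.sum_congr rfl fun j _ => by simp only [Pi.smul_apply, smul_eq_mul]; ring
  rw [hsum]
  by_cases hfx : f x = 0
  · simp [hfx]
  by_cases hxN : x ∈ range N
  · obtain ⟨i, rfl⟩ := hxN
    simp [nodalDet_apply_node]
  have hsq : ((-1 : ℝ) ^ #{i | N i < x}) ^ 2 = 1 := by
    rw [← pow_mul, Even.neg_one_pow ⟨_, by ring⟩]
  calc 0 ≤ _ := (mul_pos (hpat x hx hfx hxN) (hsign (hA hx) hxN)).le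
    _ = ((-1 : ℝ) ^ #{i | N i < x}) ^ 2 * (s * (f x * nodalDet F N x)) := by ring
    _ = s * (f x * nodalDet F N x) := by rw [hsq, one_mul]

-- Nodes go to the sign changes of `f` along `A` and, for the spare ones, beyond `A`.
theorem exists_nonneg_on_finset_of_not_signAlternating {p : ℕ} {F : Fin (p + 1) → ℝ → ℝ}
    {f : ℝ → ℝ} {a b : ℝ} (hF : IsChebyshevSystemOn F (Ico a b)) (hFc : ∀ j, Continuous (F j))
    (hf : ∀ t : Fin (p + 2) → ℝ, (∀ i, t i ∈ Ico a b) → ¬ IsSignAlternating f t)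
    (A : Finset ℝ) (hA : ↑A ⊆ Ico a b) :
    ∃ c : Fin (p + 1) → ℝ, c ≠ 0 ∧ ∀ x ∈ A, 0 ≤ ∑ j, c j * (f x * F j x) := by
  classical
  set B := A.filter (f · ≠ 0)
  rcases B.eq_empty_or_nonempty with hB | hB
  · refine ⟨fun _ => 1, fun h => one_ne_zero (congrFun h 0), fun x hx => ?_⟩
    have : f x = 0 :=
      by_contra fun h => (eq_empty_iff_forall_notMem.mp hB) x (mem_filter.mpr ⟨hx, h⟩)
    simp [this]
  have hBA : B ⊆ A := filter_subset _ _
  obtain ⟨k, Z, t, hZB, rfl, ht, htB, hpat⟩ :=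
    exists_sign_pattern_of_finset B hB fun x hx => (mem_filter.mp hx).2
  have hZp : #Z ≤ p := by
    by_contra! hZp
    exact hf _ (fun i => hA (hBA (htB _))) (ht.castLE hZp)
  have hAne : A.Nonempty := hB.mono hBA
  have hM : A.max' hAne ∈ Ico a b := hA (A.max'_mem hAne)
  obtain ⟨N, hN, hNS, hZN, -, hcount⟩ := exists_strictMono_extend_above
    (fun z hz => hA (hBA (hZB hz))) (fun z hz => A.le_max' z (hBA (hZB hz))) hM.1 hM.2 hZp
  refine hF.exists_nonneg_of_nodes (hM.1.trans_lt hM.2) hFc hN hNS hA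
    (mem_filter.mp (htB 0)).2 fun x hx hfx hxN => ?_
  have hcnt : #{z ∈ Z | z ≤ x} = #{i | N i < x} := by
    rw [hcount x (A.le_max' x hx)]
    exact congrArg card (filter_congr fun z hz =>
      ⟨fun h => h.lt_of_ne fun e => hxN (hZN (e ▸ hz)), le_of_lt⟩)
  simpa only [hcnt] using hpat x (mem_filter.mpr ⟨hx, hfx⟩)

theorem exists_ne_zero_forall_nonneg_of_finset {ι X : Type*} [Fintype ι] {G : ι → X → ℝ}
    {S : Set X}
    (h : ∀ A : Finset X, ↑A ⊆ S → ∃ c : ι → ℝ, c ≠ 0 ∧ ∀ x ∈ A, 0 ≤ ∑ j, c j * G j x) :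
    ∃ c : ι → ℝ, c ≠ 0 ∧ ∀ x ∈ S, 0 ≤ ∑ j, c j * G j x := by
  classical
  set H : X → Set (ι → ℝ) := fun x => {c | 0 ≤ ∑ j, c j * G j x}
  have hH : ∀ x, IsClosed (H x) := fun x => isClosed_le continuous_const
    (continuous_finsetSum _ fun j _ => (continuous_apply j).mul continuous_const)
  have hfip : ∀ u : Finset S, (Metric.sphere 0 1 ∩ ⋂ x ∈ u, H x).Nonempty := by
    intro u
    obtain ⟨c, hc0, hc⟩ := h (u.map (Embedding.subtype _)) (by simp)
    refine ⟨‖c‖⁻¹ • c, by simp [norm_smul, hc0], mem_iInter₂.mpr fun x hx => ?_⟩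
    simp only [H, mem_ofPred_eq, Pi.smul_apply, smul_eq_mul, mul_assoc, ← Finset.mul_sum]
    exact mul_nonneg (by positivity) (hc x (mem_map_of_mem _ hx))
  obtain ⟨c, hc1, hc⟩ :=
    (isCompact_sphere (0 : ι → ℝ) 1).inter_iInter_nonempty (fun x : S => H x) (fun x => hH x) hfip
  exact ⟨c, fun h0 => by simp [h0] at hc1, fun x hx => mem_iInter.mp hc ⟨x, hx⟩⟩

namespace IsChebyshevSystemOn

variable {n : ℕ} {F : Fin n → ℝ → ℝ} {a b : ℝ}

open Filter Topology in
theorem exists_sum_ne_zero_of_mem_nhds (hF : IsChebyshevSystemOn F (Ico a b)) {c : Fin n → ℝ}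
    (hc : c ≠ 0) {y : ℝ} (hy : y ∈ Ico a b) {U : Set ℝ} (hU : U ∈ 𝓝 y) :
    ∃ x ∈ U ∩ Ico a b, ∑ j, c j * F j x ≠ 0 := by
  obtain ⟨u, hyu, hUu⟩ := exists_Ico_subset_of_mem_nhds hU ⟨b, hy.2⟩
  have hfin : {x ∈ Ico a b | ∑ j, c j * F j x = 0}.Finite :=
    finite_of_encard_le_coe (hF c hc)
  obtain ⟨x, hx, hx0⟩ := (Ico_infinite (lt_min hyu hy.2)).exists_notMem_finite hfin
  have hxab : x ∈ Ico a b := ⟨hy.1.trans hx.1, hx.2.trans_le (min_le_right u b)⟩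
  exact ⟨x, ⟨hUu ⟨hx.1, hx.2.trans_le (min_le_left u b)⟩, hxab⟩, fun h => hx0 ⟨hxab, h⟩⟩

theorem eq_zero_of_orthogonal_of_nonneg (hF : IsChebyshevSystemOn F (Ico a b))
    (hFc : ∀ j, Continuous (F j)) {f ρ : ℝ → ℝ} (hfc : Continuous f) (hρc : Continuous ρ)
    (hρ0 : ∀ x, 0 ≤ ρ x) (hne : ∃ y ∈ Ico a b, f y * ρ y ≠ 0)
    (horth : ∀ j, ∫ x in a..b, f x * F j x * ρ x = 0) {c : Fin n → ℝ}
    (hnonneg : ∀ x ∈ Ico a b, 0 ≤ ∑ j, c j * (f x * F j x)) : c = 0 := by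
  by_contra hc
  have hsum : ∀ x, ∑ j, c j * (f x * F j x) = f x * ∑ j, c j * F j x := fun x => by
    rw [Finset.mul_sum]
    exact Finset.sum_congr rfl fun j _ => by ring
  set g := fun x => (∑ j, c j * (f x * F j x)) * ρ x
  have hgc : Continuous g := by fun_prop
  have hint : ∫ x in a..b, g x = 0 := by
    simp only [g, Finset.sum_mul]
    rw [intervalIntegral.integral_finsetSum fun j _ =>
      (by fun_prop : Continuous _).intervalIntegrable _ _]
    refine Finset.sum_eq_zero fun j _ => ?_
    simp only [mul_assoc, intervalIntegral.integral_const_mul]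
    simp [← mul_assoc, horth j]
  obtain ⟨y, hy, hfy⟩ := hne
  obtain ⟨x, ⟨hfx, hx⟩, hPx⟩ := hF.exists_sum_ne_zero_of_mem_nhds hc hy
    ((isOpen_ne_fun (hfc.mul hρc) continuous_const).mem_nhds hfy)
  have hab : a < b := hx.1.trans_lt hx.2
  have hg : ∀ x ∈ Icc a b, 0 ≤ g x := by
    rw [← closure_Ico hab.ne]
    exact (isClosed_le continuous_const hgc).closure_subset_iff.mpr fun x hx =>
      mul_nonneg (hnonneg x hx) (hρ0 x)
  have hgx : g x ≠ 0 := by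
    simp only [g, hsum, mul_right_comm _ _ (ρ x)]
    exact mul_ne_zero hfx hPx
  have := intervalIntegral.integral_pos hab hgc.continuousOn
    (fun x hx => hg x (Ioc_subset_Icc_self hx)) ⟨x, Ico_subset_Icc_self hx,
      (hg x (Ico_subset_Icc_self hx)).lt_of_ne hgx.symm⟩
  linarith

end IsChebyshevSystemOn

theorem orthogonal_to_chebyshev_sign_changes_circle_general
    (n : ℕ) (hodd : Odd n) (F : Fin n → ℝ → ℝ)
    (hFc : ∀ j, Continuous (F j))
    (hcheb : ∀ c : Fin n → ℝ, c ≠ 0 →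
      {x ∈ Set.Ico 0 (2 * Real.pi) | ∑ j, c j * F j x = 0}.encard ≤ (n - 1 : ℕ))
    (ρ : ℝ → ℝ) (hρc : Continuous ρ) (hρper : Function.Periodic ρ (2 * Real.pi))
    (hρ0 : ∀ x, 0 ≤ ρ x)
    (f : ℝ → ℝ) (hfc : Continuous f) (hfper : Function.Periodic f (2 * Real.pi))
    (hne : ∃ x, f x * ρ x ≠ 0)
    (horth : ∀ j, ∫ x in (0:ℝ)..(2 * Real.pi), f x * F j x * ρ x = 0) :
    ∃ t : Fin (n + 1) → ℝ, StrictMono t ∧ (∀ i, t i ∈ Set.Ico 0 (2 * Real.pi)) ∧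
      (∀ i : Fin n, f (t i.castSucc) * f (t i.succ) < 0) ∧
      f (t (Fin.last n)) * f (t 0) < 0 := by
  obtain ⟨p, rfl⟩ : ∃ p, n = p + 1 := ⟨n - 1, (Nat.sub_add_cancel hodd.pos).symm⟩
  by_contra hC
  have hno : ∀ t : Fin (p + 2) → ℝ, (∀ i, t i ∈ Ico 0 (2 * Real.pi)) →
      ¬ IsSignAlternating f t := fun t ht halt =>
    hC ⟨t, halt.strictMono, ht, fun i => (halt i).2, halt.mul_neg_of_odd hodd⟩
  obtain ⟨c, hc, hnonneg⟩ := exists_ne_zero_forall_nonneg_of_finset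
    (exists_nonneg_on_finset_of_not_signAlternating hcheb hFc hno)
  obtain ⟨x, hx⟩ := hne
  obtain ⟨y, hy, hxy⟩ := (hfper.mul hρper).exists_mem_Ico₀ (by positivity) x
  exact hc (IsChebyshevSystemOn.eq_zero_of_orthogonal_of_nonneg hcheb hFc hfc hρc hρ0
    ⟨y, hy, (show f y * ρ y = f x * ρ x from hxy.symm) ▸ hx⟩ horth hnonneg)

/-- If a continuous `2π`-periodic function `f` is orthogonal, with a nonnegative
continuous `2π`-periodic weight `ρ` (with `f·ρ` not identically zero), to a Chebyshev
system of odd order `n` on the circle, then `f` changes sign at least `n+1` times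
per period. -/
theorem orthogonal_to_chebyshev_sign_changes_circle
    (n : ℕ) (hodd : Odd n) (F : Fin n → ℝ → ℝ)
    (hFc : ∀ j, Continuous (F j))
    (hFper : ∀ j, Function.Periodic (F j) (2 * Real.pi))
    (hcheb : ∀ c : Fin n → ℝ, c ≠ 0 →
      {x ∈ Set.Ico 0 (2 * Real.pi) | ∑ j, c j * F j x = 0}.encard ≤ (n - 1 : ℕ))
    (ρ : ℝ → ℝ) (hρc : Continuous ρ) (hρper : Function.Periodic ρ (2 * Real.pi))
    (hρ0 : ∀ x, 0 ≤ ρ x)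
    (f : ℝ → ℝ) (hfc : Continuous f) (hfper : Function.Periodic f (2 * Real.pi))
    (hne : ∃ x, f x * ρ x ≠ 0)
    (horth : ∀ j, ∫ x in (0:ℝ)..(2 * Real.pi), f x * F j x * ρ x = 0) :
    ∃ t : Fin (n + 1) → ℝ, StrictMono t ∧ (∀ i, t i ∈ Set.Ico 0 (2 * Real.pi)) ∧
      (∀ i : Fin n, f (t i.castSucc) * f (t i.succ) < 0) ∧
      f (t (Fin.last n)) * f (t 0) < 0 :=
  orthogonal_to_chebyshev_sign_changes_circle_general n hodd F hFc hcheb ρ hρc hρper hρ0 f hfc hfper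
    hne horth
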